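/- arXiv:1911.05009 — 2 statements merged into one kernel-verified Lean document; each statement's English description precedes it below -/
import Mathlib

section
/- There exists a natural number m ≥ 1 such that j(g) = C_1(g) + Σ_{k=1}^{m−1} (C_{k+1}(g) ∩ g^k) + g^m, where C_1(g) is the center of g. (One may take m to be any index at which both the descending central series and the derived central series have stabilized.) -/
set_option maxHeartbeats 1000000


/-- The descending central series of a Lie algebra: `g^0 = g`, `g^k = [g, g^{k-1}]`
(the span of such brackets), as submodules. -/
def dcs (F : Type*) [Field F] (g : Type*) [LieRing g] [LieAlgebra F g] :
    ℕ → Submodule F g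
  | 0 => ⊤
  | k + 1 => Submodule.span F {z : g | ∃ x : g, ∃ w ∈ dcs F g k, z = ⁅x, w⁆}

/-- The derived (upper) central series of a Lie algebra:
`C_0(g) = {0}`, `C_k(g) = {x : [x, g] ⊆ C_{k-1}(g)}`, as submodules. -/
def ucs (F : Type*) [Field F] (g : Type*) [LieRing g] [LieAlgebra F g] :
    ℕ → Submodule F g
  | 0 => ⊥
  | k + 1 =>
    { carrier := {x : g | ∀ y : g, ⁅x, y⁆ ∈ ucs F g k}
      add_mem' := fun {u v} hu hv y => by
        rw [add_lie]; exact (ucs F g k).add_mem (hu y) (hv y)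
      zero_mem' := fun y => by
        rw [zero_lie]; exact (ucs F g k).zero_mem
      smul_mem' := fun c u hu y => by
        rw [smul_lie]; exact (ucs F g k).smul_mem c (hu y) }

/-- The canonical ideal `i(g) = Σ_{k≥1} (C_k(g) ∩ g^k)`. -/
def iIdeal (F : Type*) [Field F] (g : Type*) [LieRing g] [LieAlgebra F g] :
    Submodule F g :=
  ⨆ k : ℕ, ⨆ _ : 1 ≤ k, (ucs F g k ⊓ dcs F g k)

/-- The canonical ideal `j(g) = ⋂_{k≥1} (C_k(g) + g^k)`. -/
def jIdeal (F : Type*) [Field F] (g : Type*) [LieRing g] [LieAlgebra F g] :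
    Submodule F g :=
  ⨅ k : ℕ, ⨅ _ : 1 ≤ k, (ucs F g k ⊔ dcs F g k)


section aux

variable (F : Type*) [Field F] (g : Type*) [LieRing g] [LieAlgebra F g]

lemma ucs_mono : Monotone (ucs F g) := by
  apply monotone_nat_of_le_succ
  intro k
  induction k with
  | zero => exact bot_le
  | succ k ih =>
    intro x hx y
    exact ih (hx y)

lemma dcs_anti : Antitone (dcs F g) := by
  apply antitone_nat_of_succ_le
  intro k
  induction k with
  | zero => exact le_top
  | succ k ih =>
    show Submodule.span F {z : g | ∃ x : g, ∃ w ∈ dcs F g (k+1), z = ⁅x, w⁆}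
        ≤ Submodule.span F {z : g | ∃ x : g, ∃ w ∈ dcs F g k, z = ⁅x, w⁆}
    apply Submodule.span_mono
    rintro z ⟨x, w, hw, rfl⟩
    exact ⟨x, w, ih hw, rfl⟩

/-- The candidate value of `j(g)`: `C_1 + Σ_{k=1}^{n} (C_{k+1} ∩ g^k) + g^{n+1}`. -/
def Sfun (n : ℕ) : Submodule F g :=
  ucs F g 1 ⊔ (⨆ k ∈ Finset.Icc 1 n, (ucs F g (k + 1) ⊓ dcs F g k)) ⊔ dcs F g (n + 1)

lemma jIdeal_le_Sfun (n : ℕ) : jIdeal F g ≤ Sfun F g n := by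
  induction n with
  | zero =>
    have h1 : jIdeal F g ≤ ucs F g 1 ⊔ dcs F g 1 :=
      le_trans (iInf_le _ 1) (iInf_le _ le_rfl)
    refine h1.trans ?_
    unfold Sfun
    exact sup_le (le_sup_left.trans le_sup_left) le_sup_right
  | succ n ih =>
    have h2 : jIdeal F g ≤ ucs F g (n + 2) ⊔ dcs F g (n + 2) :=
      le_trans (iInf_le _ (n + 2)) (iInf_le _ (by omega))
    have h3 : jIdeal F g ≤ Sfun F g n ⊓ (ucs F g (n + 2) ⊔ dcs F g (n + 2)) := le_inf ih h2
    refine h3.trans ?_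
    -- key modular-lattice step
    have hA : ucs F g 1 ⊔ (⨆ k ∈ Finset.Icc 1 n, (ucs F g (k + 1) ⊓ dcs F g k))
        ≤ ucs F g (n + 2) ⊔ dcs F g (n + 2) := by
      refine le_trans ?_ le_sup_left
      refine sup_le (ucs_mono F g (by omega)) ?_
      refine iSup₂_le fun k hk => ?_
      have hk' : k + 1 ≤ n + 2 := by
        have := (Finset.mem_Icc.mp hk).2; omega
      exact inf_le_left.trans (ucs_mono F g hk')
    have hmod1 : Sfun F g n ⊓ (ucs F g (n + 2) ⊔ dcs F g (n + 2))
        = (ucs F g 1 ⊔ (⨆ k ∈ Finset.Icc 1 n, (ucs F g (k + 1) ⊓ dcs F g k)))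
            ⊔ dcs F g (n + 1) ⊓ (ucs F g (n + 2) ⊔ dcs F g (n + 2)) :=
      sup_inf_assoc_of_le _ hA
    have hmod2 : dcs F g (n + 1) ⊓ (ucs F g (n + 2) ⊔ dcs F g (n + 2))
        = dcs F g (n + 1) ⊓ ucs F g (n + 2) ⊔ dcs F g (n + 2) :=
      (inf_sup_assoc_of_le _ (dcs_anti F g (by omega))).symm
    rw [hmod1, hmod2]
    unfold Sfun
    refine sup_le (sup_le ?_ ?_) (sup_le ?_ ?_)
    · exact le_sup_left.trans le_sup_left
    · refine le_sup_of_le_left (le_sup_of_le_right ?_)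
      refine iSup₂_le fun k hk => ?_
      have hk' : k ∈ Finset.Icc 1 (n + 1) := by
        rw [Finset.mem_Icc] at hk ⊢; omega
      exact le_iSup₂_of_le k hk' le_rfl
    · refine le_sup_of_le_left (le_sup_of_le_right ?_)
      refine le_iSup₂_of_le (n + 1) (by simp) ?_
      rw [inf_comm]
    · exact le_sup_right

lemma Sfun_le_jIdeal (n : ℕ) (hst : ∀ j, n + 1 ≤ j → dcs F g (n + 1) = dcs F g j) :
    Sfun F g n ≤ jIdeal F g := by
  refine le_iInf fun j => le_iInf fun hj => ?_
  unfold Sfun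
  refine sup_le (sup_le ?_ ?_) ?_
  · exact (ucs_mono F g hj).trans le_sup_left
  · refine iSup₂_le fun k hk => ?_
    rcases le_or_gt (k + 1) j with h | h
    · exact inf_le_left.trans ((ucs_mono F g h).trans le_sup_left)
    · exact inf_le_right.trans ((dcs_anti F g (by omega)).trans le_sup_right)
  · rcases le_or_gt j (n + 1) with h | h
    · exact (dcs_anti F g h).trans le_sup_right
    · exact (hst j (by omega)).le.trans le_sup_right

end aux

/-- there is `m ≥ 1` with
`j(g) = C_1(g) + Σ_{k=1}^{m-1} (C_{k+1}(g) ∩ g^k) + g^m`. -/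
theorem stmt8 {F : Type*} [Field F] [CharZero F] (g : Type*) [LieRing g] [LieAlgebra F g]
    [Module.Finite F g] :
    ∃ m : ℕ, 1 ≤ m ∧
      jIdeal F g
        = ucs F g 1 ⊔ (⨆ k ∈ Finset.Icc 1 (m - 1), (ucs F g (k + 1) ⊓ dcs F g k))
            ⊔ dcs F g m := by
  obtain ⟨n₀, hn₀⟩ := IsArtinian.monotone_stabilizes (R := F) (M := g)
    ⟨fun k => OrderDual.toDual (dcs F g k), fun i j hij => dcs_anti F g hij⟩
  have hst : ∀ j, n₀ + 1 ≤ j → dcs F g (n₀ + 1) = dcs F g j := by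
    intro j hj
    have h1 : dcs F g n₀ = dcs F g (n₀ + 1) :=
      congrArg OrderDual.ofDual (hn₀ (n₀ + 1) (by omega))
    have h2 : dcs F g n₀ = dcs F g j :=
      congrArg OrderDual.ofDual (hn₀ j (by omega))
    rw [← h1, h2]
  refine ⟨n₀ + 1, by omega, ?_⟩
  have heq : jIdeal F g = Sfun F g n₀ :=
    le_antisymm (jIdeal_le_Sfun F g n₀) (Sfun_le_jIdeal F g n₀ hst)
  simpa [Sfun] using heq
end

section
/- Let g be a finite-dimensional solvable non-abelian Lie algebra over a field of characteristic zero that admits an invariant metric B and has an abelian descending central ideal (there exists ℓ ≥ 1 with [g^ℓ, g^ℓ] = {0}). Let h be any subspace of g complementary to j(g), i.e. g = h ⊕ j(g) as vector spaces. Then the linear map from i(g) to the dual space h* sending θ ∈ i(g) to the linear functional y ↦ B(θ, y) on h is a linear isomorphism. (In particular, dim i(g) = dim h = dim g − dim j(g), realizing the decomposition g ≅ h ⊕ a ⊕ h* with h* ≅ i(g) and a ⊕ h* ≅ j(g).) -/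
section Aux

open Module

variable {F : Type*} [Field F] {g : Type*} [LieRing g] [LieAlgebra F g]

lemma orth_sup (B : LinearMap.BilinForm F g) (A C : Submodule F g) :
    B.orthogonal (A ⊔ C) = B.orthogonal A ⊓ B.orthogonal C := by
  refine le_antisymm
    (le_inf (LinearMap.BilinForm.orthogonal_le le_sup_left)
      (LinearMap.BilinForm.orthogonal_le le_sup_right)) ?_
  rintro x ⟨hA, hC⟩ n hn
  have hle : A ⊔ C ≤ LinearMap.ker (B.flip x) :=
    sup_le (fun a ha => by simpa using hA a ha) (fun c hc => by simpa using hC c hc)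
  simpa [LinearMap.BilinForm.IsOrtho] using hle hn

lemma orth_iSup {ι : Sort*} (B : LinearMap.BilinForm F g) (U : ι → Submodule F g) :
    B.orthogonal (⨆ i, U i) = ⨅ i, B.orthogonal (U i) := by
  refine le_antisymm (le_iInf fun i => LinearMap.BilinForm.orthogonal_le (le_iSup U i)) ?_
  intro x hx n hn
  have hle : (⨆ i, U i) ≤ LinearMap.ker (B.flip x) := iSup_le fun i a ha => by
    simpa using (Submodule.mem_iInf _).mp hx i a ha
  simpa [LinearMap.BilinForm.IsOrtho] using hle hn

theorem stmt15_aux {F : Type*} [Field F] (g : Type*) [LieRing g] [LieAlgebra F g]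
    [Module.Finite F g]
    (B : LinearMap.BilinForm F g)
    (hsymm : ∀ x y : g, B x y = B y x)
    (hnondeg : ∀ x : g, (∀ y : g, B x y = 0) → x = 0)
    (hinv : ∀ x y z : g, B ⁅x, y⁆ z = B x ⁅y, z⁆)
    (hSub : Submodule F g)
    (hcompl : hSub ⊓ jIdeal F g = ⊥ ∧ hSub ⊔ jIdeal F g = ⊤) :
    ∃ e : ↥(iIdeal F g) ≃ₗ[F] Module.Dual F ↥hSub,
      ∀ (θ : ↥(iIdeal F g)) (y : ↥hSub), e θ y = B θ.1 y.1 := by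
  classical
  have hrefl : B.IsRefl := fun x y h => by rw [hsymm]; exact h
  have hnd : B.Nondegenerate := ⟨hnondeg, fun y h => hnondeg y (fun x => by rw [hsymm]; exact h x)⟩
  -- `C_k(g)` is the orthogonal of `g^k`
  have hucs : ∀ k, ucs F g k = B.orthogonal (dcs F g k) := by
    intro k
    induction k with
    | zero =>
      rw [show dcs F g 0 = ⊤ from rfl, B.orthogonal_top_eq_bot hnd]
      rfl
    | succ k ih =>
      ext x
      constructor
      · intro hx
        have hx' : ∀ y : g, ⁅x, y⁆ ∈ ucs F g k := hx
        intro n hn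
        have hspan : Submodule.span F {z : g | ∃ a : g, ∃ w ∈ dcs F g k, z = ⁅a, w⁆}
            ≤ LinearMap.ker (B.flip x) := by
          refine Submodule.span_le.mpr ?_
          rintro z ⟨y, w, hw, rfl⟩
          have h1 : ⁅x, y⁆ ∈ B.orthogonal (dcs F g k) := ih ▸ hx' y
          have h2 : B w ⁅x, y⁆ = 0 := h1 w hw
          have h3 : B ⁅y, w⁆ x = 0 := by
            calc B ⁅y, w⁆ x = B x ⁅y, w⁆ := hsymm _ _
              _ = B ⁅x, y⁆ w := (hinv x y w).symm
              _ = B w ⁅x, y⁆ := hsymm _ _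
              _ = 0 := h2
          simpa using h3
        have hn' : n ∈ Submodule.span F {z : g | ∃ a : g, ∃ w ∈ dcs F g k, z = ⁅a, w⁆} := hn
        simpa [LinearMap.BilinForm.IsOrtho] using hspan hn'
      · intro hx
        show ∀ y : g, ⁅x, y⁆ ∈ ucs F g k
        intro y
        rw [ih]
        intro w hw
        have hyw : ⁅y, w⁆ ∈ dcs F g (k + 1) :=
          Submodule.subset_span ⟨y, w, hw, rfl⟩
        have h0 : B ⁅y, w⁆ x = 0 := hx _ hyw
        show B w ⁅x, y⁆ = 0
        calc B w ⁅x, y⁆ = B ⁅x, y⁆ w := hsymm _ _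
          _ = B x ⁅y, w⁆ := hinv x y w
          _ = B ⁅y, w⁆ x := hsymm _ _
          _ = 0 := h0
  -- `g^k` is the orthogonal of `C_k(g)`
  have hdcs : ∀ k, dcs F g k = B.orthogonal (ucs F g k) := by
    intro k
    rw [hucs k]
    exact (B.orthogonal_orthogonal hnd hrefl _).symm
  -- simplify the sup/inf over `k ≥ 1` to sup/inf over all `k`
  have hi : iIdeal F g = ⨆ k, (ucs F g k ⊓ dcs F g k) := by
    refine le_antisymm (iSup_le fun k => iSup_le fun _ => le_iSup (fun k => ucs F g k ⊓ dcs F g k) k) (iSup_le fun k => ?_)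
    cases k with
    | zero => simp [show ucs F g 0 = (⊥ : Submodule F g) from rfl]
    | succ k => exact le_iSup₂ (f := fun k (_ : 1 ≤ k) => ucs F g k ⊓ dcs F g k) (k + 1) (Nat.succ_le_succ k.zero_le)
  have hj : jIdeal F g = ⨅ k, (ucs F g k ⊔ dcs F g k) := by
    refine le_antisymm (le_iInf fun k => ?_) (le_iInf₂ fun k _ => iInf_le _ k)
    cases k with
    | zero => simp [show dcs F g 0 = (⊤ : Submodule F g) from rfl]
    | succ k => exact iInf₂_le (k + 1) (Nat.succ_le_succ k.zero_le)
  -- `i(g)` is the orthogonal of `j(g)`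
  have h1 : ∀ k, ucs F g k ⊓ dcs F g k = B.orthogonal (ucs F g k ⊔ dcs F g k) := by
    intro k
    rw [orth_sup, ← hucs k, ← hdcs k]
    exact inf_comm _ _
  have hij : iIdeal F g = B.orthogonal (jIdeal F g) := by
    rw [hi, hj]
    simp_rw [h1]
    have h2 : (⨅ k, (ucs F g k ⊔ dcs F g k)) =
        B.orthogonal (⨆ k, B.orthogonal (ucs F g k ⊔ dcs F g k)) := by
      rw [orth_iSup]
      exact iInf_congr fun k => (B.orthogonal_orthogonal hnd hrefl _).symm
    rw [h2, B.orthogonal_orthogonal hnd hrefl]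
  -- dimension count
  have hfin1 : finrank F (iIdeal F g) = finrank F g - finrank F (jIdeal F g) := by
    rw [hij]
    exact LinearMap.BilinForm.finrank_orthogonal hnd _
  have hfin2 : finrank F hSub + finrank F (jIdeal F g) = finrank F g := by
    have h := Submodule.finrank_sup_add_finrank_inf_eq hSub (jIdeal F g)
    rw [hcompl.1, hcompl.2] at h
    simpa using h.symm
  have hjle : finrank F (jIdeal F g) ≤ finrank F g := Submodule.finrank_le _
  have hrank : finrank F (iIdeal F g) = finrank F (Module.Dual F hSub) := by
    rw [Subspace.dual_finrank_eq]
    omega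
  -- the linear map and its bijectivity
  let f : ↥(iIdeal F g) →ₗ[F] Module.Dual F ↥hSub :=
    { toFun := fun θ => (B θ.1).comp hSub.subtype
      map_add' := fun a b => by ext y; simp
      map_smul' := fun c a => by ext y; simp }
  have hinj : Function.Injective f := by
    rw [← LinearMap.ker_eq_bot, LinearMap.ker_eq_bot']
    intro θ hθ
    have hθ1 : ∀ y : g, y ∈ hSub → B θ.1 y = 0 := fun y hy => by
      have := congrArg (fun φ : Module.Dual F ↥hSub => φ ⟨y, hy⟩) hθ
      simpa [f] using this
    have hθmem : θ.1 ∈ B.orthogonal (jIdeal F g) := hij ▸ θ.2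
    have hθ2 : ∀ y ∈ jIdeal F g, B θ.1 y = 0 := fun y hy => by
      rw [hsymm]; exact hθmem y hy
    have hall : ∀ y : g, B θ.1 y = 0 := by
      intro y
      have hy : y ∈ hSub ⊔ jIdeal F g := by rw [hcompl.2]; exact Submodule.mem_top
      obtain ⟨a, ha, b, hb, rfl⟩ := Submodule.mem_sup.mp hy
      rw [map_add, hθ1 a ha, hθ2 b hb, add_zero]
    exact Subtype.ext (hnondeg _ hall)
  have hsurj : Function.Surjective f :=
    (LinearMap.injective_iff_surjective_of_finrank_eq_finrank hrank).mp hinj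
  exact ⟨LinearEquiv.ofBijective f ⟨hinj, hsurj⟩, fun θ y => rfl⟩

end Aux

/-- for a solvable non-abelian quadratic Lie algebra `g` with an abelian
descending central ideal, and any complement `h` of `j(g)`, the map
`i(g) → h*`, `θ ↦ (y ↦ B(θ, y))`, is a linear isomorphism. -/
theorem stmt15 {F : Type*} [Field F] [CharZero F] (g : Type*) [LieRing g] [LieAlgebra F g]
    [Module.Finite F g] [LieAlgebra.IsSolvable g]
    (hnonab : ∃ x y : g, ⁅x, y⁆ ≠ 0)
    (B : g →ₗ[F] g →ₗ[F] F)
    (hsymm : ∀ x y : g, B x y = B y x)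
    (hnondeg : ∀ x : g, (∀ y : g, B x y = 0) → x = 0)
    (hinv : ∀ x y z : g, B ⁅x, y⁆ z = B x ⁅y, z⁆)
    (habel : ∃ ℓ : ℕ, 1 ≤ ℓ ∧ ∀ u ∈ dcs F g ℓ, ∀ v ∈ dcs F g ℓ, ⁅u, v⁆ = 0)
    (hSub : Submodule F g)
    (hcompl : hSub ⊓ jIdeal F g = ⊥ ∧ hSub ⊔ jIdeal F g = ⊤) :
    ∃ e : ↥(iIdeal F g) ≃ₗ[F] Module.Dual F ↥hSub,
      ∀ (θ : ↥(iIdeal F g)) (y : ↥hSub), e θ y = B θ.1 y.1 := by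
  exact stmt15_aux g B hsymm hnondeg hinv hSub hcompl
end
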